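/- If ν_LS defines a category on a normal topological space X (i.e. additionally satisfies axiom (iii)), then ν_LS(A) = ν_H(cl(A)) for every subset A ⊆ X; in particular ν_LS and ν_H agree on closed subsets. -/

import Mathlib

open Set

noncomputable def coverNum {X : Type*} [TopologicalSpace X] (T : Set (Set X)) (A : Set X) : ℕ∞ :=
  sInf {n : ℕ∞ | ∃ F : Finset (Set X), (F.card : ℕ∞) = n ∧ ↑F ⊆ T ∧ A ⊆ ⋃₀ ↑F}

def ContractibleIn {X : Type*} [TopologicalSpace X] (A : Set X) : Prop :=
  ∃ c : X, (⟨Subtype.val, continuous_subtype_val⟩ : C(A, X)).Homotopic (ContinuousMap.const A c)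

noncomputable def nuH (M : Type*) [TopologicalSpace M] : Set M → ℕ∞ :=
  coverNum {U : Set M | IsOpen U ∧ ContractibleIn U}

noncomputable def nuLS (M : Type*) [TopologicalSpace M] : Set M → ℕ∞ :=
  coverNum {C : Set M | IsClosed C ∧ ContractibleIn C}


/-
Idea: in a normal space a finite open cover of a closed set shrinks to a closed cover with no more
members, so `ν_LS ≤ ν_H` on closed sets. Conversely, axiom (iii) thickens every closed
contractible set `C` to an open `U ⊇ C` with `ν_LS(U) = ν_LS(C) ≤ 1`, so `U` lies in a single closed
contractible set and is contractible itself; replacing each member of a closed cover by such a `U`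
gives `ν_H ≤ ν_LS`. Since finite unions of closed sets are closed, `ν_LS(cl A) = ν_LS(A)`.
-/

section

variable {X : Type*} [TopologicalSpace X]

theorem ContractibleIn.mono {A B : Set X} (hB : ContractibleIn B) (h : A ⊆ B) :
    ContractibleIn A := by
  obtain ⟨c, H⟩ := hB
  exact ⟨c, H.comp (ContinuousMap.Homotopic.refl ⟨inclusion h, continuous_inclusion h⟩)⟩

theorem contractibleIn_empty [Nonempty X] : ContractibleIn (∅ : Set X) :=
  ⟨Classical.arbitrary X, by
    convert ContinuousMap.Homotopic.refl _
    ext x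
    exact isEmptyElim x⟩

section coverNum

variable {T : Set (Set X)} {A B : Set X}

theorem coverNum_le_card {F : Finset (Set X)} (hF : ↑F ⊆ T) (hA : A ⊆ ⋃₀ ↑F) :
    coverNum T A ≤ F.card :=
  sInf_le ⟨F, rfl, hF, hA⟩

theorem coverNum_le_card_of_subset_iUnion {ι : Type*} [Fintype ι] {f : ι → Set X}
    (hf : ∀ i, f i ∈ T) (hA : A ⊆ ⋃ i, f i) : coverNum T A ≤ Fintype.card ι := by
  classical
  calc coverNum T A ≤ (Finset.univ.image f).card :=
        coverNum_le_card (by simpa [Set.range_subset_iff] using hf) (by simpa using hA)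
    _ ≤ Fintype.card ι := by exact_mod_cast Finset.card_image_le

theorem le_coverNum {n : ℕ∞}
    (h : ∀ F : Finset (Set X), ↑F ⊆ T → A ⊆ ⋃₀ ↑F → n ≤ F.card) : n ≤ coverNum T A :=
  le_sInf fun _ ⟨F, hcard, hF, hA⟩ => hcard ▸ h F hF hA

theorem exists_finset_of_coverNum_le {n : ℕ} (h : coverNum T A ≤ n) :
    ∃ F : Finset (Set X), F.card ≤ n ∧ ↑F ⊆ T ∧ A ⊆ ⋃₀ ↑F := by
  by_contra! hF
  have : ((n + 1 : ℕ) : ℕ∞) ≤ n := (le_coverNum fun F hFT hA =>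
    Nat.cast_le.2 (not_le.1 fun hle => hF F hle hFT hA)).trans h
  exact n.not_succ_le_self (by exact_mod_cast this)

theorem coverNum_mono (h : A ⊆ B) : coverNum T A ≤ coverNum T B :=
  le_coverNum fun _ hF hB => coverNum_le_card hF (h.trans hB)

theorem coverNum_le_of_forall_exists_superset {T' : Set (Set X)}
    (hT : ∀ t ∈ T, ∃ t' ∈ T', t ⊆ t') : coverNum T' A ≤ coverNum T A :=
  le_coverNum fun F hF hA => by
    choose g hgT' hg using fun t : F => hT t (hF t.2)
    refine (coverNum_le_card_of_subset_iUnion hgT' fun x hx => ?_).trans (by simp)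
    obtain ⟨t, ht, hxt⟩ := hA hx
    exact mem_iUnion.2 ⟨⟨t, ht⟩, hg _ hxt⟩

theorem coverNum_closure (hT : ∀ t ∈ T, IsClosed t) : coverNum T (closure A) = coverNum T A :=
  (coverNum_mono subset_closure).antisymm' <| le_coverNum fun F hF hA =>
    coverNum_le_card hF <| closure_minimal hA <| by
      rw [sUnion_eq_biUnion]
      exact isClosed_biUnion_finset fun t ht => hT t (hF ht)

end coverNum

theorem nuLS_closure (A : Set X) : nuLS X (closure A) = nuLS X A :=
  coverNum_closure fun _ ht => ht.1

theorem nuLS_le_nuH_of_isClosed [NormalSpace X] {s : Set X} (hs : IsClosed s) :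
    nuLS X s ≤ nuH X s :=
  le_coverNum fun F hF hs_cover => by
    obtain ⟨v, hsv, hv_closed, hv_sub⟩ := exists_subset_iUnion_closed_subset hs
      (u := fun t : F => (t : Set X)) (fun t => (hF t.2).1) (fun _ _ => toFinite _)
      fun x hx => by
        obtain ⟨t, ht, hxt⟩ := hs_cover hx
        exact mem_iUnion.2 ⟨⟨t, ht⟩, hxt⟩
    exact (coverNum_le_card_of_subset_iUnion (T := {C | IsClosed C ∧ ContractibleIn C})
      (fun t => ⟨hv_closed t, (hF t.2).2.mono (hv_sub t)⟩) hsv).trans (by simp)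

theorem ContractibleIn.of_nuLS_le_one [Nonempty X] {U : Set X} (h : nuLS X U ≤ 1) :
    ContractibleIn U := by
  obtain ⟨F, hcard, hF, hU⟩ := exists_finset_of_coverNum_le (n := 1) (by exact_mod_cast h)
  rcases F.eq_empty_or_nonempty with rfl | ⟨t, ht⟩
  · exact contractibleIn_empty.mono (by simpa using hU)
  · refine (hF ht).2.mono (hU.trans (sUnion_subset fun s hs => ?_))
    exact (Finset.card_le_one.1 hcard s hs t ht).le

theorem ContractibleIn.of_nuLS_eq {C U : Set X} (hC_closed : IsClosed C) (hC : ContractibleIn C)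
    (hCU : nuLS X C = nuLS X U) : ContractibleIn U := by
  obtain ⟨c, -⟩ := id hC
  have : Nonempty X := ⟨c⟩
  have hC_le : nuLS X C ≤ 1 :=
    (coverNum_le_card (F := {C}) (by simpa using And.intro hC_closed hC) (by simp)).trans (by simp)
  exact .of_nuLS_le_one (hCU ▸ hC_le)

theorem nuH_le_nuLS
    (hiii : ∀ A : Set X, ∃ U : Set X, IsOpen U ∧ A ⊆ U ∧ nuLS X A = nuLS X U) (A : Set X) :
    nuH X A ≤ nuLS X A :=
  coverNum_le_of_forall_exists_superset fun C ⟨hC_closed, hC⟩ => by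
    obtain ⟨U, hU_open, hCU, hCU_eq⟩ := hiii C
    exact ⟨U, ⟨hU_open, .of_nuLS_eq hC_closed hC hCU_eq⟩, hCU⟩

end

/-- if `ν_LS` defines a category on a normal space `X` (i.e. also satisfies
axiom (iii)), then `ν_LS(A) = ν_H(cl A)` for every `A`; in particular `ν_LS` and `ν_H`
agree on closed subsets. -/
theorem nuLS_eq_nuH_closure {X : Type*} [TopologicalSpace X] [NormalSpace X]
    (hiii : ∀ A : Set X, ∃ U : Set X, IsOpen U ∧ A ⊆ U ∧ nuLS X A = nuLS X U) :
    (∀ A : Set X, nuLS X A = nuH X (closure A)) ∧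
    (∀ A : Set X, IsClosed A → nuLS X A = nuH X A) := by
  have main (A : Set X) : nuLS X A = nuH X (closure A) := by
    rw [← nuLS_closure A]
    exact (nuLS_le_nuH_of_isClosed isClosed_closure).antisymm
      (nuH_le_nuLS hiii _)
  exact ⟨main, fun A hA => by rw [main A, hA.closure_eq]⟩
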